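/- Let P ∈ ℝ³, n a unit vector, and Π the plane through P with normal n. Let c₁^(p), …, c_n^(p) ∈ Π be fixed points with c_ℓ^(p) ≠ P for all ℓ, and suppose points c₁, …, c_n satisfy the affine recurrence c_ℓ = α_ℓ P + β_ℓ c_{ℓ−2} + γ_ℓ c_{ℓ−1} with α_ℓ + β_ℓ + γ_ℓ = 1 for ℓ ≥ 3 (barycentric combinations). Then the minimizer over (c₁, c₂) ∈ (ℝ³)² of φ = Σ_ℓ ‖c_ℓ − c_ℓ^(p)‖² / ‖c_ℓ^(p) − P‖² exists, is unique, and all resulting points c₁, …, c_n lie on the plane Π. -/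

import Mathlib

open scoped RealInnerProductSpace

/-!
With the weights `‖cp ℓ - P‖⁻¹`, the functional is `φ c = ‖A c - b‖²` for a linear map `A` into an
`L²` product of copies of `ℝ³`; `A` is injective because `c₁, c₂` are themselves points of the
sequence. Least squares with an injective `A` has exactly one solution, the preimage of the
orthogonal projection of `b` onto the range of `A`.

For barycentric weights the sequence commutes with every linear isometry about `P`. The reflection
in `Π` fixes every target `cp ℓ`, so it preserves `φ` and therefore fixes the unique minimizer;
a sequence whose first two points lie in `Π` stays in `Π`.
-/

/-- The sequence of control points around a vertex: `c₁, c₂` are free and the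
remaining points are barycentric combinations `c_ℓ = α_ℓ P + β_ℓ c_{ℓ-2} + γ_ℓ c_{ℓ-1}`. -/
noncomputable def seqC (P : EuclideanSpace ℝ (Fin 3)) (α β γ : ℕ → ℝ)
    (c1 c2 : EuclideanSpace ℝ (Fin 3)) : ℕ → EuclideanSpace ℝ (Fin 3)
  | 0 => c1
  | 1 => c1
  | 2 => c2
  | (ℓ + 3) => α (ℓ + 3) • P + β (ℓ + 3) • seqC P α β γ c1 c2 (ℓ + 1)
      + γ (ℓ + 3) • seqC P α β γ c1 c2 (ℓ + 2)

local notation "E³" => EuclideanSpace ℝ (Fin 3)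

section SeqLinear

variable {V W : Type*} [AddCommGroup V] [Module ℝ V] [AddCommGroup W] [Module ℝ W]

noncomputable def seqCLinear (α β γ : ℕ → ℝ) : ℕ → V × V →ₗ[ℝ] V
  | 0 => LinearMap.fst ℝ V V
  | 1 => LinearMap.fst ℝ V V
  | 2 => LinearMap.snd ℝ V V
  | ℓ + 3 => β (ℓ + 3) • seqCLinear α β γ (ℓ + 1) + γ (ℓ + 3) • seqCLinear α β γ (ℓ + 2)

theorem map_seqCLinear {F : Type*} [FunLike F V W] [LinearMapClass F ℝ V W] (L : F)
    (α β γ : ℕ → ℝ) (ℓ : ℕ) (a b : V) :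
    L (seqCLinear α β γ ℓ (a, b)) = seqCLinear α β γ ℓ (L a, L b) := by
  induction ℓ using seqCLinear.induct with
  | case1 | case2 | case3 => rfl
  | case4 ℓ ih₁ ih₂ =>
    simp only [seqCLinear, LinearMap.add_apply, LinearMap.smul_apply, map_add, map_smul, ih₁, ih₂]

end SeqLinear

theorem seqC_eq_add_seqCLinear (P : E³) (α β γ : ℕ → ℝ) (c₁ c₂ : E³) (ℓ : ℕ) :
    seqC P α β γ c₁ c₂ ℓ = seqC P α β γ 0 0 ℓ + seqCLinear α β γ ℓ (c₁, c₂) := by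
  induction ℓ using seqCLinear.induct with
  | case1 | case2 | case3 => simp [seqC, seqCLinear]
  | case4 ℓ ih₁ ih₂ =>
    simp only [seqC, seqCLinear, LinearMap.add_apply, LinearMap.smul_apply, ih₁, ih₂]
    module

theorem seqC_self (P : E³) {α β γ : ℕ → ℝ} (hbary : ∀ ℓ, 3 ≤ ℓ → α ℓ + β ℓ + γ ℓ = 1)
    (ℓ : ℕ) : seqC P α β γ P P ℓ = P := by
  induction ℓ using seqCLinear.induct with
  | case1 | case2 | case3 => rfl
  | case4 ℓ ih₁ ih₂ =>
    rw [seqC, ih₁, ih₂, ← add_smul, ← add_smul, hbary (ℓ + 3) (by omega), one_smul]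

theorem seqC_eq_add_seqCLinear_sub (P : E³) {α β γ : ℕ → ℝ}
    (hbary : ∀ ℓ, 3 ≤ ℓ → α ℓ + β ℓ + γ ℓ = 1) (c₁ c₂ : E³) (ℓ : ℕ) :
    seqC P α β γ c₁ c₂ ℓ = P + seqCLinear α β γ ℓ (c₁ - P, c₂ - P) := by
  have hP := seqC_self P hbary ℓ
  rw [seqC_eq_add_seqCLinear] at hP
  rw [seqC_eq_add_seqCLinear, ← Prod.mk_sub_mk, map_sub, eq_sub_of_add_eq hP]
  abel

theorem seqC_sub_mem (P : E³) {α β γ : ℕ → ℝ} (hbary : ∀ ℓ, 3 ≤ ℓ → α ℓ + β ℓ + γ ℓ = 1)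
    {K : Submodule ℝ E³} {c₁ c₂ : E³} (h₁ : c₁ - P ∈ K) (h₂ : c₂ - P ∈ K) (ℓ : ℕ) :
    seqC P α β γ c₁ c₂ ℓ - P ∈ K := by
  have hK : seqCLinear α β γ ℓ (c₁ - P, c₂ - P) =
      K.subtype (seqCLinear α β γ ℓ (⟨_, h₁⟩, ⟨_, h₂⟩)) :=
    (map_seqCLinear K.subtype α β γ ℓ ⟨_, h₁⟩ ⟨_, h₂⟩).symm
  rw [seqC_eq_add_seqCLinear_sub P hbary, add_sub_cancel_left, hK]
  exact Submodule.coe_mem _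

theorem LinearMap.existsUnique_norm_sub_sq_le {E F : Type*} [AddCommGroup E] [Module ℝ E]
    [FiniteDimensional ℝ E] [NormedAddCommGroup F] [InnerProductSpace ℝ F] {A : E →ₗ[ℝ] F}
    (hA : Function.Injective A) (b : F) : ∃! x, ∀ y, ‖A x - b‖ ^ 2 ≤ ‖A y - b‖ ^ 2 := by
  set K := LinearMap.range A
  obtain ⟨x, hx⟩ := LinearMap.mem_range.1 (K.starProjection_apply_mem b)
  have pythagoras : ∀ y, ‖A y - b‖ ^ 2 = ‖A y - A x‖ ^ 2 + ‖A x - b‖ ^ 2 := fun y => by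
    have horth : ⟪A y - A x, A x - b⟫ = 0 := by
      rw [hx, ← neg_sub b, inner_neg_right, real_inner_comm, neg_eq_zero]
      exact K.starProjection_inner_eq_zero b _
        (K.sub_mem (LinearMap.mem_range_self A y) (K.starProjection_apply_mem b))
    rw [← sub_add_sub_cancel (A y) (A x) b, norm_add_sq_real, horth]
    ring
  refine ⟨x, fun y => ?_, fun y hy => hA ?_⟩
  · rw [pythagoras y]
    exact le_add_of_nonneg_left (sq_nonneg _)
  · have := hy x
    rw [pythagoras y] at this
    simpa [sub_eq_zero] using (by linarith : ‖A y - A x‖ ^ 2 ≤ 0)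

noncomputable def fitError (n : ℕ) (P : E³) (cp : ℕ → E³) (α β γ : ℕ → ℝ) (c : E³ × E³) : ℝ :=
  ∑ ℓ ∈ Finset.Icc 1 n, ‖seqC P α β γ c.1 c.2 ℓ - cp ℓ‖ ^ 2 / ‖cp ℓ - P‖ ^ 2

noncomputable def weightedSeqCLinear (n : ℕ) (P : E³) (cp : ℕ → E³) (α β γ : ℕ → ℝ) :
    E³ × E³ →ₗ[ℝ] PiLp 2 (fun _ : Finset.Icc 1 n => E³) :=
  (WithLp.linearEquiv 2 ℝ _).symm.toLinearMap ∘ₗ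
    LinearMap.pi fun ℓ => ‖cp ℓ - P‖⁻¹ • seqCLinear α β γ ℓ

theorem exists_fitError_eq_norm_sub_sq (n : ℕ) (P : E³) (cp : ℕ → E³) (α β γ : ℕ → ℝ) :
    ∃ b, ∀ c, fitError n P cp α β γ c = ‖weightedSeqCLinear n P cp α β γ c - b‖ ^ 2 := by
  set b := WithLp.toLp 2 fun ℓ : Finset.Icc 1 n => ‖cp ℓ - P‖⁻¹ • (cp ℓ - seqC P α β γ 0 0 ℓ)
  refine ⟨b, fun c => ?_⟩
  rw [PiLp.norm_sq_eq_of_L2, fitError, ← Finset.sum_coe_sort]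
  refine Finset.sum_congr rfl fun ℓ _ => ?_
  have hentry : (weightedSeqCLinear n P cp α β γ c - b) ℓ =
      ‖cp ℓ - P‖⁻¹ • (seqC P α β γ c.1 c.2 ℓ - cp ℓ) := by
    change ‖cp ℓ - P‖⁻¹ • seqCLinear α β γ ℓ c - ‖cp ℓ - P‖⁻¹ • (cp ℓ - seqC P α β γ 0 0 ℓ) = _
    rw [seqC_eq_add_seqCLinear P α β γ c.1 c.2, ← smul_sub]
    congr 1
    abel
  rw [hentry, norm_smul, norm_inv, norm_norm, mul_pow, inv_pow, div_eq_inv_mul]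

theorem weightedSeqCLinear_injective {n : ℕ} (hn : 2 ≤ n) {P : E³} {cp : ℕ → E³}
    (h₁ : cp 1 ≠ P) (h₂ : cp 2 ≠ P) (α β γ : ℕ → ℝ) :
    Function.Injective (weightedSeqCLinear n P cp α β γ) := by
  refine (injective_iff_map_eq_zero _).2 fun c hc => ?_
  have entry : ∀ ℓ (hℓ : ℓ ∈ Finset.Icc 1 n), ‖cp ℓ - P‖⁻¹ • seqCLinear α β γ ℓ c = 0 :=
    fun ℓ hℓ => congrArg (· ⟨ℓ, hℓ⟩) hc
  have weight_ne : ∀ {ℓ}, cp ℓ ≠ P → ‖cp ℓ - P‖⁻¹ ≠ 0 := fun h =>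
    inv_ne_zero (norm_ne_zero_iff.2 (sub_ne_zero.2 h))
  exact Prod.ext
    ((smul_eq_zero_iff_right (weight_ne h₁)).1 (entry 1 (Finset.mem_Icc.2 ⟨le_rfl, by omega⟩)))
    ((smul_eq_zero_iff_right (weight_ne h₂)).1 (entry 2 (Finset.mem_Icc.2 ⟨by omega, hn⟩)))

theorem existsUnique_fitError_le {n : ℕ} (hn : 2 ≤ n) {P : E³} {cp : ℕ → E³}
    (h₁ : cp 1 ≠ P) (h₂ : cp 2 ≠ P) (α β γ : ℕ → ℝ) :
    ∃! x, ∀ y, fitError n P cp α β γ x ≤ fitError n P cp α β γ y := by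
  obtain ⟨b, hb⟩ := exists_fitError_eq_norm_sub_sq n P cp α β γ
  simpa only [hb] using
    LinearMap.existsUnique_norm_sub_sq_le (weightedSeqCLinear_injective hn h₁ h₂ α β γ) b

theorem fitError_isometry_about_eq {n : ℕ} (P : E³) {cp : ℕ → E³} {α β γ : ℕ → ℝ}
    (hbary : ∀ ℓ, 3 ≤ ℓ → α ℓ + β ℓ + γ ℓ = 1) (R : E³ ≃ₗᵢ[ℝ] E³)
    (hR : ∀ ℓ ∈ Finset.Icc 1 n, R (cp ℓ - P) = cp ℓ - P) (c : E³ × E³) :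
    fitError n P cp α β γ (P + R (c.1 - P), P + R (c.2 - P)) = fitError n P cp α β γ c := by
  refine Finset.sum_congr rfl fun ℓ hℓ => ?_
  rw [seqC_eq_add_seqCLinear_sub P hbary, seqC_eq_add_seqCLinear_sub P hbary c.1 c.2,
    add_sub_cancel_left, add_sub_cancel_left, ← map_seqCLinear R]
  set s := seqCLinear α β γ ℓ (c.1 - P, c.2 - P)
  calc ‖P + R s - cp ℓ‖ ^ 2 / ‖cp ℓ - P‖ ^ 2 = ‖R (s - (cp ℓ - P))‖ ^ 2 / ‖cp ℓ - P‖ ^ 2 := by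
        rw [map_sub, hR ℓ hℓ]; congr 3; abel
    _ = ‖P + s - cp ℓ‖ ^ 2 / ‖cp ℓ - P‖ ^ 2 := by
        rw [R.norm_map]; congr 3; abel

theorem stmt11_general (n : ℕ) (hn : 2 ≤ n) (P nv : EuclideanSpace ℝ (Fin 3))
    (cp : ℕ → EuclideanSpace ℝ (Fin 3))
    (hcp : ∀ ℓ ∈ Finset.Icc 1 n, ⟪cp ℓ - P, nv⟫ = 0 ∧ cp ℓ ≠ P)
    (α β γ : ℕ → ℝ) (hbary : ∀ ℓ, 3 ≤ ℓ → α ℓ + β ℓ + γ ℓ = 1) :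
    ∃ x : EuclideanSpace ℝ (Fin 3) × EuclideanSpace ℝ (Fin 3),
      (∀ y : EuclideanSpace ℝ (Fin 3) × EuclideanSpace ℝ (Fin 3), (∑ ℓ ∈ Finset.Icc 1 n, ‖seqC P α β γ x.1 x.2 ℓ - cp ℓ‖ ^ 2 / ‖cp ℓ - P‖ ^ 2)
          ≤ ∑ ℓ ∈ Finset.Icc 1 n, ‖seqC P α β γ y.1 y.2 ℓ - cp ℓ‖ ^ 2 / ‖cp ℓ - P‖ ^ 2) ∧
      (∀ y : EuclideanSpace ℝ (Fin 3) × EuclideanSpace ℝ (Fin 3), (∀ z : EuclideanSpace ℝ (Fin 3) × EuclideanSpace ℝ (Fin 3), (∑ ℓ ∈ Finset.Icc 1 n,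
              ‖seqC P α β γ y.1 y.2 ℓ - cp ℓ‖ ^ 2 / ‖cp ℓ - P‖ ^ 2)
            ≤ ∑ ℓ ∈ Finset.Icc 1 n, ‖seqC P α β γ z.1 z.2 ℓ - cp ℓ‖ ^ 2 / ‖cp ℓ - P‖ ^ 2)
          → y = x) ∧
      (∀ ℓ ∈ Finset.Icc 1 n, ⟪seqC P α β γ x.1 x.2 ℓ - P, nv⟫ = 0) := by
  set plane := (ℝ ∙ nv)ᗮ
  have hcp_plane : ∀ ℓ ∈ Finset.Icc 1 n, plane.reflection (cp ℓ - P) = cp ℓ - P := fun ℓ hℓ =>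
    (plane.reflection_eq_self_iff _).2
      (Submodule.mem_orthogonal_singleton_iff_inner_left.2 (hcp ℓ hℓ).1)
  obtain ⟨x, hmin, huniq⟩ := existsUnique_fitError_le hn (hcp 1 (Finset.mem_Icc.2 ⟨le_rfl, by omega⟩)).2
    (hcp 2 (Finset.mem_Icc.2 ⟨by omega, hn⟩)).2 α β γ
  refine ⟨x, hmin, huniq, ?_⟩
  have hfix : (P + plane.reflection (x.1 - P), P + plane.reflection (x.2 - P)) = x :=
    huniq _ fun y => (fitError_isometry_about_eq P hbary _ hcp_plane x).le.trans (hmin y)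
  have hmem : ∀ c, P + plane.reflection (c - P) = c → c - P ∈ plane := fun c hc =>
    (plane.reflection_eq_self_iff _).1 (eq_sub_of_add_eq' hc)
  intro ℓ _
  exact Submodule.mem_orthogonal_singleton_iff_inner_left.1 <|
    seqC_sub_mem P hbary (hmem _ (congrArg Prod.fst hfix)) (hmem _ (congrArg Prod.snd hfix)) ℓ

/-- the least-squares functional `φ` has a unique minimizer over
`(c₁, c₂)`, and all resulting points lie on the plane `Π` through `P` with normal `n`. -/
theorem stmt11 (n : ℕ) (hn : 2 ≤ n) (P nv : EuclideanSpace ℝ (Fin 3)) (hnv : ‖nv‖ = 1)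
    (cp : ℕ → EuclideanSpace ℝ (Fin 3))
    (hcp : ∀ ℓ ∈ Finset.Icc 1 n, ⟪cp ℓ - P, nv⟫ = 0 ∧ cp ℓ ≠ P)
    (α β γ : ℕ → ℝ) (hbary : ∀ ℓ, 3 ≤ ℓ → α ℓ + β ℓ + γ ℓ = 1) :
    ∃ x : EuclideanSpace ℝ (Fin 3) × EuclideanSpace ℝ (Fin 3),
      (∀ y : EuclideanSpace ℝ (Fin 3) × EuclideanSpace ℝ (Fin 3), (∑ ℓ ∈ Finset.Icc 1 n, ‖seqC P α β γ x.1 x.2 ℓ - cp ℓ‖ ^ 2 / ‖cp ℓ - P‖ ^ 2)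
          ≤ ∑ ℓ ∈ Finset.Icc 1 n, ‖seqC P α β γ y.1 y.2 ℓ - cp ℓ‖ ^ 2 / ‖cp ℓ - P‖ ^ 2) ∧
      (∀ y : EuclideanSpace ℝ (Fin 3) × EuclideanSpace ℝ (Fin 3), (∀ z : EuclideanSpace ℝ (Fin 3) × EuclideanSpace ℝ (Fin 3), (∑ ℓ ∈ Finset.Icc 1 n,
              ‖seqC P α β γ y.1 y.2 ℓ - cp ℓ‖ ^ 2 / ‖cp ℓ - P‖ ^ 2)
            ≤ ∑ ℓ ∈ Finset.Icc 1 n, ‖seqC P α β γ z.1 z.2 ℓ - cp ℓ‖ ^ 2 / ‖cp ℓ - P‖ ^ 2)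
          → y = x) ∧
      (∀ ℓ ∈ Finset.Icc 1 n, ⟪seqC P α β γ x.1 x.2 ℓ - P, nv⟫ = 0) :=
  stmt11_general n hn P nv cp hcp α β γ hbary
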